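/- The Shapley, Banzhaf, and TPM GCMs do not satisfy Scheduling Monotonicity: there exist a makespan function v satisfying (S1)–(S4), a finite set T of transactions, and transactions tx3, tx4 not in T with v(T∪{tx3}) < v(T∪{tx4}), but gas_{T∪{tx3}}(tx3) > gas_{T∪{tx4}}(tx4) for each of the three mechanisms. In particular, for T = {tx1, tx2} with tx1 ≃ (1,{k1}), tx2 ≃ (3,{k2}), tx3 ≃ (2,{k1}), tx4 ≃ (1,{k2}) and v the optimal-scheduler makespan on at least 2 threads, one has v(T∪{tx3}) = 3 < 4 = v(T∪{tx4}), yet the Shapley values are 1 > 5/6, the Banzhaf values are 1 > 3/4, and the TPM values are 1 > 4/5. -/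

import Mathlib

/-- The Shapley GCM. -/
noncomputable def shapleyGas {Tx : Type} [DecidableEq Tx]
    (v : Finset Tx → ℝ) (T : Finset Tx) (tx : Tx) : ℝ :=
  ∑ S ∈ (T.erase tx).powerset,
    ((S.card.factorial * (T.card - S.card - 1).factorial : ℝ) / (T.card.factorial : ℝ))
      * (v (insert tx S) - v S)

/-- The Banzhaf GCM. -/
noncomputable def banzhafGas {Tx : Type} [DecidableEq Tx]
    (v : Finset Tx → ℝ) (T : Finset Tx) (tx : Tx) : ℝ :=
  (1 / 2 ^ (T.card - 1)) * ∑ S ∈ (T.erase tx).powerset, (v (insert tx S) - v S)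

/-- The Time-Proportional Makespan (TPM) GCM. -/
noncomputable def tpmGas {Tx : Type} [DecidableEq Tx]
    (t : Tx → ℝ) (v : Finset Tx → ℝ) (T : Finset Tx) (tx : Tx) : ℝ :=
  (t tx / ∑ tx' ∈ T, t tx') * v T

/-- Execution times of `tx1 ≃ (1,{k1})`, `tx2 ≃ (3,{k2})`, `tx3 ≃ (2,{k1})`,
`tx4 ≃ (1,{k2})` (indices `0,1,2,3`). -/
noncomputable def tTx7 : Fin 4 → ℝ := ![1, 3, 2, 1]

/-- Storage key sets (keys `k1 = 0`, `k2 = 1`). -/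
def keysTx7 : Fin 4 → Finset (Fin 2) := ![{0}, {1}, {0}, {1}]

/-!
Take `v` to be the optimal makespan: transactions sharing a key run one after another and
transactions on different keys run in parallel, so `v` is the larger of the two key loads. It
satisfies (S1)–(S4) for any nonnegative times. With `T = {tx1, tx2}`, `tx3` lands on the light
key `k1` and `tx4` on the heavy key `k2`, so `v(T ∪ {tx3}) = 3 < 4 = v(T ∪ {tx4})`. Yet `tx3`
adds its whole time `2` to the small coalitions `∅` and `{tx1}`, while `tx4` never adds more
than `1`: the marginal contributions are `2, 2, 0, 0` against `1, 0, 1, 1`, which Shapley and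
Banzhaf average to `1 > 5/6` and `1 > 3/4`. TPM charges `tx3` a third of `3` but `tx4` only a
fifth of `4`.
-/

open Finset

section KeyLoad

variable {Tx κ : Type*} [DecidableEq κ] (t : Tx → ℝ) (keys : Tx → Finset κ)

def keyLoad (S : Finset Tx) (k : κ) : ℝ :=
  ∑ i ∈ S with k ∈ keys i, t i

/-- For transactions touching a single key each, run on at least as many threads as there are
keys, this is the makespan of an optimal schedule. -/
noncomputable def maxKeyLoad (S : Finset Tx) : ℝ :=
  ⨆ k, keyLoad t keys S k

variable {t keys}

theorem keyLoad_empty (k : κ) : keyLoad t keys ∅ k = 0 :=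
  sum_empty

theorem keyLoad_singleton (a : Tx) (k : κ) :
    keyLoad t keys {a} k = if k ∈ keys a then t a else 0 := by
  rw [keyLoad, sum_filter, sum_singleton]

theorem keyLoad_insert [DecidableEq Tx] {S : Finset Tx} {a : Tx} (ha : a ∉ S) (k : κ) :
    keyLoad t keys (insert a S) k = (if k ∈ keys a then t a else 0) + keyLoad t keys S k := by
  simp only [keyLoad, filter_insert]
  split_ifs
  · exact sum_insert fun h => ha (mem_filter.1 h).1
  · rw [zero_add]

theorem maxKeyLoad_empty : maxKeyLoad t keys ∅ = 0 := by
  simp only [maxKeyLoad, keyLoad_empty, Real.iSup_const_zero]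

variable [Finite κ]

theorem maxKeyLoad_le_of_keyLoad_le {S S' : Finset Tx}
    (h : ∀ k, keyLoad t keys S k ≤ keyLoad t keys S' k) :
    maxKeyLoad t keys S ≤ maxKeyLoad t keys S' :=
  ciSup_mono (Finite.bddAbove_range _) h

theorem maxKeyLoad_mono (h0 : 0 ≤ t) : Monotone (maxKeyLoad t keys) := fun _ _ h =>
  maxKeyLoad_le_of_keyLoad_le fun _ =>
    sum_le_sum_of_subset_of_nonneg (filter_subset_filter _ h) fun i _ _ => h0 i

variable [DecidableEq Tx] {S : Finset Tx} {a b c : Tx}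

theorem maxKeyLoad_insert_le_insert (h0 : 0 ≤ t) (ha : a ∉ S) (hb : b ∉ S) (ht : t a ≤ t b)
    (hkeys : keys a ⊆ keys b) :
    maxKeyLoad t keys (insert a S) ≤ maxKeyLoad t keys (insert b S) := by
  refine maxKeyLoad_le_of_keyLoad_le fun k => ?_
  rw [keyLoad_insert ha, keyLoad_insert hb]
  gcongr
  split_ifs with hka hkb
  exacts [ht, absurd (hkeys hka) hkb, h0 b, le_rfl]

theorem maxKeyLoad_insert_insert_le_insert (h0 : 0 ≤ t) (ha : a ∉ S) (hb : b ∉ S) (hc : c ∉ S)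
    (hab : a ≠ b) (ht : t c = t a + t b) (hkeys : keys c = keys a ∪ keys b) :
    maxKeyLoad t keys (insert a (insert b S)) ≤ maxKeyLoad t keys (insert c S) := by
  refine maxKeyLoad_le_of_keyLoad_le fun k => ?_
  rw [keyLoad_insert (by simp [hab, ha]), keyLoad_insert hb, keyLoad_insert hc, ← add_assoc]
  gcongr
  have hta := h0 a
  have htb := h0 b
  split_ifs <;> simp_all

end KeyLoad

theorem ciSup_fin_two {α : Type*} [ConditionallyCompleteLinearOrder α] (f : Fin 2 → α) :
    ⨆ i, f i = max (f 0) (f 1) :=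
  le_antisymm (ciSup_le <| Fin.forall_fin_two.2 ⟨le_max_left _ _, le_max_right _ _⟩)
    (max_le (le_ciSup (Finite.bddAbove_range f) 0) (le_ciSup (Finite.bddAbove_range f) 1))

theorem Finset.sum_powerset_pair {α β : Type*} [DecidableEq α] [AddCommMonoid β] {a b : α}
    (hab : a ≠ b) (f : Finset α → β) :
    ∑ S ∈ ({a, b} : Finset α).powerset, f S = f ∅ + f {a} + f {b} + f {a, b} := by
  have powerset_singleton : ({b} : Finset α).powerset = {∅, {b}} := by
    ext; simp [subset_singleton_iff]
  rw [sum_powerset_insert (by simpa using hab), powerset_singleton,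
    sum_pair (singleton_ne_empty b).symm, sum_pair (singleton_ne_empty b).symm, insert_empty_eq]
  abel

theorem Finset.card_triple {α : Type*} [DecidableEq α] {x a b : α} (hxa : x ≠ a) (hxb : x ≠ b)
    (hab : a ≠ b) : ({x, a, b} : Finset α).card = 3 := by
  rw [card_insert_of_notMem (by simp [hxa, hxb]), card_pair hab]

section ThreePlayers

variable {Tx : Type} [DecidableEq Tx] (v : Finset Tx → ℝ) {x a b : Tx}

theorem shapleyGas_triple (hxa : x ≠ a) (hxb : x ≠ b) (hab : a ≠ b) :
    shapleyGas v {x, a, b} x = (v {x} - v ∅) / 3 + (v {x, a} - v {a}) / 6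
      + (v {x, b} - v {b}) / 6 + (v {x, a, b} - v {a, b}) / 3 := by
  rw [shapleyGas, card_triple hxa hxb hab, erase_insert (by simp [hxa, hxb]),
    sum_powerset_pair hab]
  simp only [card_empty, card_singleton, card_pair hab, insert_empty_eq, Nat.reduceSub,
    Nat.factorial_zero, Nat.factorial_one, Nat.factorial_two, Nat.factorial]
  push_cast
  ring

theorem banzhafGas_triple (hxa : x ≠ a) (hxb : x ≠ b) (hab : a ≠ b) :
    banzhafGas v {x, a, b} x = ((v {x} - v ∅) + (v {x, a} - v {a})
      + (v {x, b} - v {b}) + (v {x, a, b} - v {a, b})) / 4 := by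
  rw [banzhafGas, card_triple hxa hxb hab, erase_insert (by simp [hxa, hxb]),
    sum_powerset_pair hab]
  simp only [insert_empty_eq, Nat.reduceSub]
  ring

end ThreePlayers

theorem tTx7_nonneg : 0 ≤ tTx7 := fun i => by
  fin_cases i <;> norm_num [tTx7]

/-- The Shapley, Banzhaf and TPM GCMs do not satisfy Scheduling
Monotonicity: there is a makespan function `v` satisfying (S1)–(S4) (the
optimal-scheduler makespan on at least 2 threads), a set `T = {tx1, tx2}` and
transactions `tx3, tx4 ∉ T` with `v(T∪{tx3}) = 3 < 4 = v(T∪{tx4})`, yet the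
Shapley values are `1 > 5/6`, the Banzhaf values `1 > 3/4`, and the TPM values
`1 > 4/5`. -/
theorem shapley_banzhaf_tpm_not_scheduling_monotone :
    ∃ v : Finset (Fin 4) → ℝ,
      -- (S1) monotonicity in T
      (∀ A B : Finset (Fin 4), A ⊆ B → v A ≤ v B) ∧
      -- (S2) monotonicity under bundling
      (∀ (T : Finset (Fin 4)) (a b c : Fin 4), a ∉ T → b ∉ T → c ∉ T → a ≠ b →
        tTx7 c = tTx7 a + tTx7 b → keysTx7 c = keysTx7 a ∪ keysTx7 b →
        v (insert a (insert b T)) ≤ v (insert c T)) ∧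
      -- (S3) monotonicity in t and K
      (∀ (T : Finset (Fin 4)) (a b : Fin 4), a ∉ T → b ∉ T →
        tTx7 a ≤ tTx7 b → keysTx7 a ⊆ keysTx7 b →
        v (insert a T) ≤ v (insert b T)) ∧
      -- (S4) empty set
      v ∅ = 0 ∧
      -- makespans of the two augmented blocks
      v (insert 2 ({0, 1} : Finset (Fin 4))) = 3 ∧
      v (insert 3 ({0, 1} : Finset (Fin 4))) = 4 ∧
      v (insert 2 ({0, 1} : Finset (Fin 4))) < v (insert 3 ({0, 1} : Finset (Fin 4))) ∧
      -- Shapley values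
      shapleyGas v (insert 2 ({0, 1} : Finset (Fin 4))) 2 = 1 ∧
      shapleyGas v (insert 3 ({0, 1} : Finset (Fin 4))) 3 = 5 / 6 ∧
      shapleyGas v (insert 3 ({0, 1} : Finset (Fin 4))) 3
        < shapleyGas v (insert 2 ({0, 1} : Finset (Fin 4))) 2 ∧
      -- Banzhaf values
      banzhafGas v (insert 2 ({0, 1} : Finset (Fin 4))) 2 = 1 ∧
      banzhafGas v (insert 3 ({0, 1} : Finset (Fin 4))) 3 = 3 / 4 ∧
      banzhafGas v (insert 3 ({0, 1} : Finset (Fin 4))) 3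
        < banzhafGas v (insert 2 ({0, 1} : Finset (Fin 4))) 2 ∧
      -- TPM values
      tpmGas tTx7 v (insert 2 ({0, 1} : Finset (Fin 4))) 2 = 1 ∧
      tpmGas tTx7 v (insert 3 ({0, 1} : Finset (Fin 4))) 3 = 4 / 5 ∧
      tpmGas tTx7 v (insert 3 ({0, 1} : Finset (Fin 4))) 3
        < tpmGas tTx7 v (insert 2 ({0, 1} : Finset (Fin 4))) 2 := by
  refine ⟨maxKeyLoad tTx7 keysTx7, fun _ _ h => maxKeyLoad_mono tTx7_nonneg h,
    fun _ _ _ _ => maxKeyLoad_insert_insert_le_insert tTx7_nonneg,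
    fun _ _ _ => maxKeyLoad_insert_le_insert tTx7_nonneg, maxKeyLoad_empty, ?_⟩
  rw [shapleyGas_triple _ (by decide) (by decide) (by decide),
    shapleyGas_triple _ (by decide) (by decide) (by decide),
    banzhafGas_triple _ (by decide) (by decide) (by decide),
    banzhafGas_triple _ (by decide) (by decide) (by decide), tpmGas, tpmGas]
  simp [maxKeyLoad, ciSup_fin_two, keyLoad_insert, keyLoad_singleton, keyLoad_empty, keysTx7, tTx7]
  norm_num
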